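/- There exists a graph model G_min whose order theory is minimum among the order theories of all graph models: Th_⊑(G_min) ⊆ Th_⊑(G) for every graph model G; consequently Th(G_min) ⊆ Th(G) for every graph model G. -/

import Mathlib

universe u v

/-- Untyped λ-terms in de Bruijn notation (over the countably infinite
supply of variables `ℕ`). -/
inductive Term : Type
  | var : ℕ → Term
  | app : Term → Term → Term
  | lam : Term → Term
  deriving DecidableEq

namespace Term

/-- Shift the free variables `≥ d` up by one. -/
def lift (d : ℕ) : Term → Term
  | var n => if n < d then var n else var (n + 1)
  | app M N => app (lift d M) (lift d N)
  | lam M => lam (lift (d + 1) M)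

/-- Capture-avoiding substitution of `N` for the free variable `k`. -/
def subst : Term → ℕ → Term → Term
  | var n, k, N => if n = k then N else if k < n then var (n - 1) else var n
  | app P Q, k, N => app (subst P k N) (subst Q k N)
  | lam P, k, N => lam (subst P (k + 1) (lift 0 N))

/-- One-step β-reduction. -/
inductive Step : Term → Term → Prop
  | beta (M N : Term) : Step (app (lam M) N) (subst M 0 N)
  | appL {M M' : Term} (N : Term) : Step M M' → Step (app M N) (app M' N)
  | appR (M : Term) {N N' : Term} : Step N N' → Step (app M N) (app M N')
  | abs {M M' : Term} : Step M M' → Step (lam M) (lam M')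

/-- β-conversion: the least equivalence relation containing one-step β-reduction. -/
inductive BetaConv : Term → Term → Prop
  | of {M N : Term} : Step M N → BetaConv M N
  | refl (M : Term) : BetaConv M M
  | symm {M N : Term} : BetaConv M N → BetaConv N M
  | trans {M N P : Term} : BetaConv M N → BetaConv N P → BetaConv M P

/-- All free variables are `< d`. -/
def BoundedBy : Term → ℕ → Prop
  | var n, d => n < d
  | app M N, d => BoundedBy M d ∧ BoundedBy N d
  | lam M, d => BoundedBy M (d + 1)

/-- Closed λ-terms. -/
def Closed (M : Term) : Prop := BoundedBy M 0

/-- Terms of the form `y M₁ ⋯ Mₖ` (a variable applied to arguments). -/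
inductive IsVarApp : Term → Prop
  | var (n : ℕ) : IsVarApp (var n)
  | app {M : Term} (N : Term) : IsVarApp M → IsVarApp (app M N)

/-- Head normal forms `λx₁…xₙ. y M₁ ⋯ Mₖ`. -/
inductive IsHnf : Term → Prop
  | head {M : Term} : IsVarApp M → IsHnf M
  | abs {M : Term} : IsHnf M → IsHnf (lam M)

/-- A λ-term is solvable if it is β-convertible to a head normal form. -/
def Solvable (M : Term) : Prop := ∃ N, BetaConv M N ∧ IsHnf N

/-- Unsolvable λ-terms. -/
def Unsolvable (M : Term) : Prop := ¬ Solvable M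

/-- β-normal forms: terms containing no β-redex. -/
def IsNormal : Term → Prop
  | var _ => True
  | lam M => IsNormal M
  | app M N => (∀ P, M ≠ lam P) ∧ IsNormal M ∧ IsNormal N

/-- A fixed effective bijective Gödel numbering of λ-terms. -/
def code : Term → ℕ
  | var n => 3 * n
  | app M N => 3 * Nat.pair (code M) (code N) + 1
  | lam M => 3 * code M + 2

/-- `δ = λx.xx`. -/
def delta : Term := lam (app (var 0) (var 0))

/-- `Ω = (λx.xx)(λx.xx)`. -/
def Omega : Term := app delta delta

/-- `I = λx.x`. -/
def Idt : Term := lam (var 0)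

end Term

open Term

/-- A set of λ-terms is r.e. if its set of Gödel codes is r.e. -/
def TermSetRe (V : Set Term) : Prop := REPred fun n : ℕ => ∃ M ∈ V, code M = n

/-- A set of λ-terms is co-r.e. if its set of Gödel codes is co-r.e.; since the
numbering is bijective this means that the code set of the complement is r.e. -/
def TermSetCoRe (V : Set Term) : Prop := TermSetRe Vᶜ

/-- β-co-r.e. sets: co-r.e. sets of λ-terms closed under β-conversion. -/
def BetaCoRe (V : Set Term) : Prop :=
  (∀ M N, M ∈ V → BetaConv M N → N ∈ V) ∧ TermSetCoRe V

/-- A set of pairs of λ-terms is r.e. if the corresponding set of codes of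
pairs is r.e. -/
def PairsRe (T : Set (Term × Term)) : Prop :=
  REPred fun n : ℕ => ∃ p ∈ T, Nat.pair (code p.1) (code p.2) = n

/-- λ-theories: congruences on Λ containing β-conversion. -/
def IsLambdaTheory (T : Term → Term → Prop) : Prop :=
  Equivalence T ∧
  (∀ M M' N N', T M M' → T N N' → T (Term.app M N) (Term.app M' N')) ∧
  (∀ M M', T M M' → T (Term.lam M) (Term.lam M')) ∧
  (∀ M N, BetaConv M N → T M N)

/-- Partial pairs (as raw data): a carrier set together with a partial map `j`,
given as an `Option`-valued map on pairs of a subset and an element. -/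
structure PrePair (α : Type u) : Type u where
  carrier : Set α
  j : Set α × α → Option α

namespace PrePair

variable {α : Type u}

/-- The defining conditions of a partial pair: the carrier is non-empty and `j`
is a partial injection `A* × A ⇀ A`. -/
def Valid (P : PrePair α) : Prop :=
  P.carrier.Nonempty ∧
  (∀ a x y, P.j (a, x) = some y →
      a.Finite ∧ a ⊆ P.carrier ∧ x ∈ P.carrier ∧ y ∈ P.carrier) ∧
  (∀ p q y, P.j p = some y → P.j q = some y → p = q)

/-- Total pairs: `j` is defined on every pair of a finite subset of the
carrier and an element of the carrier. -/
def Total (P : PrePair α) : Prop :=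
  ∀ a x, a.Finite → a ⊆ P.carrier → x ∈ P.carrier → ∃ y, P.j (a, x) = some y

/-- Webs of graph models: total pairs with infinite carrier. -/
def IsGraphModel (P : PrePair α) : Prop := P.Valid ∧ P.Total ∧ P.carrier.Infinite

/-- The subpair relation `A ⊑ B`. -/
def Subpair (P Q : PrePair α) : Prop :=
  P.carrier ⊆ Q.carrier ∧ ∀ p y, P.j p = some y → Q.j p = some y

end PrePair

/-- Consing a value onto an environment (de Bruijn style). -/
def envCons {α : Type u} (s : Set α) (ρ : ℕ → Set α) : ℕ → Set α
  | 0 => s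
  | n + 1 => ρ n

/-- The interpretation of a λ-term with respect to a partial pair and an
environment. -/
def interp {α : Type u} (P : PrePair α) : Term → (ℕ → Set α) → Set α
  | Term.var n, ρ => ρ n
  | Term.app M N, ρ =>
      {y | ∃ a : Set α, a.Finite ∧ a ⊆ interp P N ρ ∧
        ∃ z, P.j (a, y) = some z ∧ z ∈ interp P M ρ}
  | Term.lam M, ρ =>
      {y | ∃ (a : Set α) (x : α), a.Finite ∧ P.j (a, x) = some y ∧
        x ∈ interp P M (envCons a ρ)}

/-- The interpretation of a closed λ-term. -/
def interpC {α : Type u} (P : PrePair α) (M : Term) : Set α :=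
  interp P M fun _ => (∅ : Set α)

/-- The order theory of (the graph model generated by) a pair. -/
def ThLe {α : Type u} (P : PrePair α) : Set (Term × Term) :=
  {p | ∀ ρ : ℕ → Set α, (∀ n, ρ n ⊆ P.carrier) → interp P p.1 ρ ⊆ interp P p.2 ρ}

/-- The equational theory of (the graph model generated by) a pair. -/
def Th {α : Type u} (P : PrePair α) : Set (Term × Term) :=
  {p | ∀ ρ : ℕ → Set α, (∀ n, ρ n ⊆ P.carrier) → interp P p.1 ρ = interp P p.2 ρ}

/-- Morphisms of partial pairs. -/
def IsMorphism {α : Type u} {β : Type v} (P : PrePair α) (Q : PrePair β)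
    (f : α → β) : Prop :=
  Set.MapsTo f P.carrier Q.carrier ∧
  ∀ a x y, a ⊆ P.carrier → x ∈ P.carrier → P.j (a, x) = some y →
    Q.j (f '' a, f x) = some (f y)

/-- Isomorphisms of partial pairs: morphisms which are bijections between the
carriers and whose inverse is also a morphism. -/
def IsIso {α : Type u} {β : Type v} (P : PrePair α) (Q : PrePair β)
    (f : α → β) : Prop :=
  IsMorphism P Q f ∧
  ∃ g : β → α, IsMorphism Q P g ∧
    (∀ x ∈ P.carrier, g (f x) = x) ∧ ∀ y ∈ Q.carrier, f (g y) = y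

/-- The ambient type of the free completion: formal copies `base x` of the
original elements together with formal pairs `node`. -/
inductive FC (α : Type u) : Type u
  | base : α → FC α
  | node : List (FC α) → FC α → FC α

namespace FC

variable {α : Type u}

open scoped Classical

/-- A canonical list enumerating a finite set. -/
noncomputable def listOf (s : Set (FC α)) : List (FC α) :=
  if h : s.Finite then h.toFinset.toList else []

/-- The copy of the original carrier inside `FC α`. -/
def baseSet (P : PrePair α) : Set (FC α) := base '' P.carrier

/-- `(a, x)` is the copy of a pair in the domain of `j`. -/
def IsOldDom (P : PrePair α) (a : Set (FC α)) (x : FC α) : Prop :=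
  ∃ (a₀ : Set α) (x₀ : α), a = base '' a₀ ∧ x = base x₀ ∧ (P.j (a₀, x₀)).isSome

/-- The increasing stages `Aₙ` of the free completion:
`A₀ = A` and `A_{n+1} = A ∪ ((Aₙ* × Aₙ) ∖ dom j)`. -/
def stage (P : PrePair α) : ℕ → Set (FC α)
  | 0 => baseSet P
  | n + 1 => baseSet P ∪
      {t | ∃ (a : Set (FC α)) (x : FC α), a.Finite ∧ a ⊆ stage P n ∧
        x ∈ stage P n ∧ ¬ IsOldDom P a x ∧ t = node (listOf a) x}

/-- The carrier `Ā = ⋃ₙ Aₙ` of the free completion. -/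
def compCarrier (P : PrePair α) : Set (FC α) := ⋃ n, stage P n

/-- `y` is the copy of the old value `j (a₀, x₀)`, where `(a, x)` is the copy
of `(a₀, x₀) ∈ dom j`. -/
def OldVal (P : PrePair α) (a : Set (FC α)) (x y : FC α) : Prop :=
  ∃ (a₀ : Set α) (x₀ y₀ : α), a = base '' a₀ ∧ x = base x₀ ∧
    P.j (a₀, x₀) = some y₀ ∧ y = base y₀

/-- The total injection `j̄` of the free completion: it extends `j` and sends
every other pair `(a, α)` of the completion to (the formal copy of) itself. -/
noncomputable def jbar (P : PrePair α) (p : Set (FC α) × FC α) : Option (FC α) :=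
  if p.1.Finite ∧ p.1 ⊆ compCarrier P ∧ p.2 ∈ compCarrier P then
    if h : ∃ y, OldVal P p.1 p.2 y then some h.choose
    else some (node (listOf p.1) p.2)
  else none

end FC

/-- The free completion `Ā` of a partial pair `A`, as a total pair on `FC α`. -/
noncomputable def completion {α : Type u} (P : PrePair α) : PrePair (FC α) :=
  ⟨FC.compCarrier P, FC.jbar P⟩

/-- The fixed effective encoding of finite subsets of `ℕ`. -/
def encF (s : Finset ℕ) : ℕ := s.sum fun i => 2 ^ i

/-- A partial pair on `ℕ` whose carrier is a decidable set and whose map `j` is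
partial recursive with decidable domain (under the fixed effective encoding of
finite sets and pairs). -/
def ConcreteWE (Q : PrePair ℕ) : Prop :=
  ComputablePred (· ∈ Q.carrier) ∧
  ∃ f : ℕ →. ℕ, Nat.Partrec f ∧ ComputablePred (fun n => (f n).Dom) ∧
    ∀ (a : Finset ℕ) (x y : ℕ), Q.j (↑a, x) = some y ↔ y ∈ f (Nat.pair (encF a) x)

/-- The range of `j` is decidable. -/
def ConcreteRange (Q : PrePair ℕ) : Prop :=
  ComputablePred fun y => ∃ p, Q.j p = some y

/-- Weakly effective partial pairs: partial pairs isomorphic to a partial pair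
on `ℕ` with decidable carrier whose `j` is partial recursive with decidable
domain. -/
def WeaklyEffective {α : Type u} (P : PrePair α) : Prop :=
  ∃ Q : PrePair ℕ, ConcreteWE Q ∧ ∃ f : α → ℕ, IsIso P Q f

/-- Effective partial pairs: weakly effective via a pair whose `j` moreover has
decidable range. -/
def EffectivePair {α : Type u} (P : PrePair α) : Prop :=
  ∃ Q : PrePair ℕ, ConcreteWE Q ∧ ConcreteRange Q ∧ ∃ f : α → ℕ, IsIso P Q f

/-- Effective total pairs: total pairs isomorphic to some `(ℕ, ℓ)` with `ℓ`
total recursive, injective and with decidable range. -/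
def EffectiveTotalPair {α : Type u} (P : PrePair α) : Prop :=
  ∃ Q : PrePair ℕ, Q.carrier = Set.univ ∧
    (∃ f : ℕ → ℕ, Computable f ∧ Function.Injective f ∧
      ComputablePred (fun y => ∃ n, f n = y) ∧
      ∀ (a : Finset ℕ) (x : ℕ), Q.j (↑a, x) = some (f (Nat.pair (encF a) x))) ∧
    ∃ h : α → ℕ, IsIso P Q h


/-!
`G_min` is the free completion of the disjoint union of all finite partial pairs, coded in `ℕ`.
If `α ∈ ⟦M⟧_ρ` in a graph model `H`, the same holds in the restriction of `H` (and of `ρ`) to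
some finite set `S`. That finite pair is a component of `G_min`, so `α` can be pushed into `G_min`,
where `M ⊑ N` applies. Totality of `H` then lets the free completion generated by that component
be interpreted back in `H` by a partial map compatible with `j`, which carries `⟦N⟧` of `G_min`
into `⟦N⟧` of `H` and returns `α`.
-/

open Set

section Semantics

variable {α : Type*} {β : Type*} {γ : Type*}

theorem interp_mono {P Q : PrePair α} (hPQ : ∀ p y, P.j p = some y → Q.j p = some y) :
    ∀ (M : Term) {ρ σ : ℕ → Set α}, (∀ n, ρ n ⊆ σ n) → interp P M ρ ⊆ interp Q M σ
  | .var n, _, _, hρσ => hρσ n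
  | .app M N, _, _, hρσ => fun _ ⟨a, ha, haN, u, hau, huM⟩ =>
      ⟨a, ha, haN.trans (interp_mono hPQ N hρσ), u, hPQ _ _ hau, interp_mono hPQ M hρσ huM⟩
  | .lam M, _, _, hρσ => fun _ ⟨a, x, ha, hax, hxM⟩ =>
      ⟨a, x, ha, hPQ _ _ hax, interp_mono hPQ M (fun n => by cases n <;> simp [envCons, hρσ]) hxM⟩

theorem interp_subset_carrier {P : PrePair α}
    (hP : ∀ a x y, P.j (a, x) = some y → x ∈ P.carrier ∧ y ∈ P.carrier) :
    ∀ (M : Term) {ρ : ℕ → Set α}, (∀ n, ρ n ⊆ P.carrier) → interp P M ρ ⊆ P.carrier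
  | .var n, _, hρ => hρ n
  | .app _ _, _, _ => fun _ ⟨_, _, _, _, hau, _⟩ => (hP _ _ _ hau).1
  | .lam _, _, _ => fun _ ⟨_, _, _, hax, _⟩ => (hP _ _ _ hax).2

def partialImage (φ : α → Option β) (a : Set α) : Set β := some ⁻¹' (φ '' a)

theorem mem_partialImage {φ : α → Option β} {a : Set α} {y : β} :
    y ∈ partialImage φ a ↔ ∃ x ∈ a, φ x = some y := Iff.rfl

theorem Set.Finite.partialImage {φ : α → Option β} {a : Set α} (ha : a.Finite) :
    (partialImage φ a).Finite :=
  (ha.image φ).preimage (Option.some_injective β).injOn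

theorem partialImage_image {f : γ → α} {φ : α → Option β} {g : γ → β} {a : Set γ}
    (h : ∀ m ∈ a, φ (f m) = some (g m)) : partialImage φ (f '' a) = g '' a := by
  ext w
  constructor
  · rintro ⟨_, ⟨m, hm, rfl⟩, hw⟩
    exact ⟨m, hm, Option.some_inj.mp ((h m hm).symm.trans hw)⟩
  · rintro ⟨m, hm, rfl⟩
    exact ⟨f m, mem_image_of_mem f hm, h m hm⟩

theorem partialImage_partialImage {g : α → Option β} {φ : β → Option α} {a : Set α}
    (h : ∀ x ∈ a, (g x).bind φ = some x) : partialImage φ (partialImage g a) = a := by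
  ext w
  simp only [mem_partialImage]
  constructor
  · rintro ⟨c, ⟨x, hx, hxc⟩, hcw⟩
    have := h x hx
    rw [hxc, Option.bind_some, hcw, Option.some_inj] at this
    exact this ▸ hx
  · intro hw
    obtain ⟨c, hwc, hcw⟩ := Option.bind_eq_some_iff.mp (h w hw)
    exact ⟨c, ⟨w, hw, hwc⟩, hcw⟩

structure IsPartialHom (P : PrePair α) (Q : PrePair β) (φ : α → Option β) : Prop where
  mapsTo : ∀ x y, φ x = some y → y ∈ Q.carrier
  isSome_iff : ∀ a x y, P.j (a, x) = some y → ((φ x).isSome ↔ (φ y).isSome)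
  map_j : ∀ a x y x' y', P.j (a, x) = some y → φ x = some x' → φ y = some y' →
    Q.j (partialImage φ a, x') = some y'

theorem IsPartialHom.mem_interp {P : PrePair α} {Q : PrePair β} {φ : α → Option β}
    (hφ : IsPartialHom P Q φ) :
    ∀ (M : Term) {ρ : ℕ → Set α} {z : α} {z' : β}, φ z = some z' → z ∈ interp P M ρ →
      z' ∈ interp Q M (fun n => partialImage φ (ρ n))
  | .var n, _, _, _, hz', hz => ⟨_, hz, hz'⟩
  | .app M N, ρ, z, z', hz', ⟨a, ha, haN, u, hzu, huM⟩ => by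
    obtain ⟨u', hu'⟩ := Option.isSome_iff_exists.mp
      ((hφ.isSome_iff _ _ _ hzu).mp (Option.isSome_iff_exists.mpr ⟨z', hz'⟩))
    refine ⟨partialImage φ a, ha.partialImage, ?_, u', hφ.map_j _ _ _ _ _ hzu hz' hu',
      hφ.mem_interp M hu' huM⟩
    rintro w ⟨v, hv, hvw⟩
    exact hφ.mem_interp N hvw (haN hv)
  | .lam M, ρ, z, z', hz', ⟨a, x, ha, hxz, hxM⟩ => by
    obtain ⟨x', hx'⟩ := Option.isSome_iff_exists.mp
      ((hφ.isSome_iff _ _ _ hxz).mpr (Option.isSome_iff_exists.mpr ⟨z', hz'⟩))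
    refine ⟨partialImage φ a, x', ha.partialImage, hφ.map_j _ _ _ _ _ hxz hx' hz', ?_⟩
    convert hφ.mem_interp M hx' hxM using 2
    funext n
    cases n <;> rfl

open Classical in
noncomputable def PrePair.restrict (H : PrePair β) (S : Set β) : PrePair β where
  carrier := S
  j p := if p.1 ⊆ S ∧ p.2 ∈ S ∧ ∀ y, H.j p = some y → y ∈ S then H.j p else none

namespace PrePair

variable {H : PrePair β} {S T : Set β}

theorem restrict_j_eq_some {a : Set β} {x y : β} :
    (H.restrict S).j (a, x) = some y ↔ H.j (a, x) = some y ∧ a ⊆ S ∧ x ∈ S ∧ y ∈ S := by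
  simp only [restrict]
  split_ifs with h
  · exact ⟨fun hy => ⟨hy, h.1, h.2.1, h.2.2 y hy⟩, fun hy => hy.1⟩
  · refine ⟨False.elim, fun ⟨hy, ha, hx, hyS⟩ => (h ⟨ha, hx, fun y' hy' => ?_⟩).elim⟩
    rwa [← Option.some_inj.mp (hy'.symm.trans hy)] at hyS

theorem interp_restrict_subset (M : Term) (ρ : ℕ → Set β) :
    interp (H.restrict S) M (fun n => ρ n ∩ S) ⊆ S :=
  interp_subset_carrier (fun _ _ _ h => (restrict_j_eq_some.mp h).2.2) M
    (fun _ => inter_subset_right)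

theorem interp_restrict_mono (hST : S ⊆ T) (M : Term) (ρ : ℕ → Set β) :
    interp (H.restrict S) M (fun n => ρ n ∩ S) ⊆ interp (H.restrict T) M (fun n => ρ n ∩ T) :=
  interp_mono (by
      rintro ⟨a, x⟩ y h
      obtain ⟨hj, ha, hx, hy⟩ := restrict_j_eq_some.mp h
      exact restrict_j_eq_some.mpr ⟨hj, ha.trans hST, hST hx, hST hy⟩)
    M (fun _ => inter_subset_inter_right _ hST)

theorem exists_finset_mem_interp_restrict :
    ∀ (M : Term) {ρ : ℕ → Set β} {z : β}, z ∈ interp H M ρ →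
      ∃ S : Finset β, z ∈ interp (H.restrict S) M (fun n => ρ n ∩ S)
  | .var n, ρ, z, hz => ⟨{z}, hz, by simp⟩
  | .app M N, ρ, z, ⟨a, ha, haN, u, hzu, huM⟩ => by
    classical
    obtain ⟨SM, hSM⟩ := exists_finset_mem_interp_restrict M huM
    choose! SN hSN using fun w (hw : w ∈ a) => exists_finset_mem_interp_restrict N (haN hw)
    let S := insert z (insert u (SM ∪ ha.toFinset ∪ ha.toFinset.biUnion SN))
    refine ⟨S, a, ha, fun w hw => ?_, u, restrict_j_eq_some.mpr ⟨hzu, ?_, ?_, ?_⟩, ?_⟩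
    · refine interp_restrict_mono ?_ N ρ (hSN w hw)
      intro v hv
      simp only [S, Finset.coe_insert, Finset.coe_union, Finset.coe_biUnion]
      exact .inr (.inr (.inr (mem_biUnion (ha.mem_toFinset.mpr hw) hv)))
    · intro w hw
      simp [S, hw]
    · simp [S]
    · simp [S]
    · exact interp_restrict_mono (by intro v; simp +contextual [S]) M ρ hSM
  | .lam M, ρ, z, ⟨a, x, ha, hxz, hxM⟩ => by
    classical
    obtain ⟨SM, hSM⟩ := exists_finset_mem_interp_restrict M hxM
    let S := insert z (insert x (SM ∪ ha.toFinset))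
    have hSMS : (SM : Set β) ⊆ S := by intro v; simp +contextual [S]
    refine ⟨S, a, x, ha, restrict_j_eq_some.mpr ⟨hxz, fun w hw => by simp [S, hw], by simp [S],
      by simp [S]⟩, interp_mono (fun _ _ h => h) M (fun n => ?_)
        (interp_restrict_mono hSMS M _ hSM)⟩
    cases n with
    | zero => exact inter_subset_left
    | succ n => exact subset_rfl

end PrePair

theorem thLe_subset_of_forall_retract {Q : PrePair γ} {H : PrePair β} (hH : H.Valid)
    (hret : ∀ S : Finset β, ∃ (g : β → Option γ) (φ : γ → Option β),
      IsPartialHom (H.restrict S) Q g ∧ IsPartialHom Q H φ ∧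
        ∀ b ∈ (S : Set β) ∩ H.carrier, (g b).bind φ = some b) :
    ThLe Q ⊆ ThLe H := by
  rintro ⟨M, N⟩ hMN ρ hρ z hz
  obtain ⟨S, hzS⟩ := H.exists_finset_mem_interp_restrict M hz
  obtain ⟨g, φ, hg, hφ, hgφ⟩ := hret S
  have hzH : z ∈ H.carrier := interp_subset_carrier (fun _ _ _ h => (hH.2.1 _ _ _ h).2.2) M hρ hz
  obtain ⟨c, hgz, hφc⟩ := Option.bind_eq_some_iff.mp
    (hgφ z ⟨H.interp_restrict_subset M ρ hzS, hzH⟩)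
  have hcN := hMN (fun n => partialImage g (ρ n ∩ S)) (fun _ _ ⟨_, _, h⟩ => hg.mapsTo _ _ h)
    (hg.mem_interp M hgz hzS)
  have hzN := hφ.mem_interp N hφc hcN
  rw [funext fun n => partialImage_partialImage fun b hb => hgφ b ⟨hb.2, hρ n hb.1⟩] at hzN
  exact interp_mono (fun _ _ h => h) N (fun n => inter_subset_left) hzN

theorem th_subset_of_thLe_subset {P : PrePair α} {Q : PrePair β} (h : ThLe P ⊆ ThLe Q) :
    Th P ⊆ Th Q := fun ⟨M, N⟩ hMN ρ hρ =>
  (h (show (M, N) ∈ ThLe P from fun σ hσ => (hMN σ hσ).le) ρ hρ).antisymm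
    (h (show (N, M) ∈ ThLe P from fun σ hσ => (hMN σ hσ).ge) ρ hρ)

end Semantics

section Coding

/-- Even codes `2 ⟪k, m⟫` name the element `m` of the `k`-th finite partial pair; odd codes
`2 ⟪encF s, x⟫ + 1` name the new elements `(s, x)` of the free completion. -/
def codeEquiv : (ℕ × ℕ) ⊕ (Finset ℕ × ℕ) ≃ ℕ :=
  (Equiv.sumCongr Nat.pairEquiv
    ((Finset.equivBitIndices.symm.prodCongr (Equiv.refl ℕ)).trans Nat.pairEquiv)).trans
    Equiv.natSumNatEquivNat

def baseCode (k m : ℕ) : ℕ := codeEquiv (.inl (k, m))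

def nodeCode (s : Finset ℕ) (x : ℕ) : ℕ := codeEquiv (.inr (s, x))

theorem baseCode_inj {k m k' m' : ℕ} : baseCode k m = baseCode k' m' ↔ k = k' ∧ m = m' := by
  simp [baseCode]

theorem nodeCode_inj {s s' : Finset ℕ} {x x' : ℕ} :
    nodeCode s x = nodeCode s' x' ↔ s = s' ∧ x = x' := by
  simp [nodeCode]

theorem baseCode_ne_nodeCode (k m : ℕ) (s : Finset ℕ) (x : ℕ) : baseCode k m ≠ nodeCode s x := by
  simp [baseCode, nodeCode]

theorem baseCode_or_nodeCode (n : ℕ) : (∃ k m, n = baseCode k m) ∨ ∃ s x, n = nodeCode s x := by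
  rcases h : codeEquiv.symm n with ⟨k, m⟩ | ⟨s, x⟩
  · exact .inl ⟨k, m, by rw [baseCode, ← h, Equiv.apply_symm_apply]⟩
  · exact .inr ⟨s, x, by rw [nodeCode, ← h, Equiv.apply_symm_apply]⟩

theorem nodeCode_eq (s : Finset ℕ) (x : ℕ) : nodeCode s x = 2 * Nat.pair (encF s) x + 1 := rfl

theorem lt_nodeCode_of_mem {s : Finset ℕ} {m : ℕ} (x : ℕ) (hm : m ∈ s) : m < nodeCode s x := by
  have := (Finset.lt_geomSum_of_mem le_rfl hm).trans_le (Nat.left_le_pair (encF s) x)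
  rw [nodeCode_eq]
  omega

theorem lt_nodeCode_right (s : Finset ℕ) (x : ℕ) : x < nodeCode s x := by
  have := Nat.right_le_pair (encF s) x
  rw [nodeCode_eq]
  omega

variable {C : Type*}

def codeRec (base : ℕ → ℕ → C) (node : Set C → C → C) (n : ℕ) : C :=
  match h : codeEquiv.symm n with
  | .inl (k, m) => base k m
  | .inr (s, x) =>
    have hn : n = nodeCode s x := by rw [nodeCode, ← h, Equiv.apply_symm_apply]
    node (range fun m : s => codeRec base node m) (codeRec base node x)
termination_by n
decreasing_by
  · exact hn ▸ lt_nodeCode_of_mem x m.2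
  · exact hn ▸ lt_nodeCode_right s x

theorem codeRec_baseCode (base : ℕ → ℕ → C) (node : Set C → C → C) (k m : ℕ) :
    codeRec base node (baseCode k m) = base k m := by
  rw [codeRec]
  split <;> rename_i h <;> rw [baseCode, Equiv.symm_apply_apply] at h <;> cases h
  rfl

theorem codeRec_nodeCode (base : ℕ → ℕ → C) (node : Set C → C → C) (s : Finset ℕ) (x : ℕ) :
    codeRec base node (nodeCode s x) =
      node (codeRec base node '' s) (codeRec base node x) := by
  rw [codeRec]
  split <;> rename_i h <;> rw [nodeCode, Equiv.symm_apply_apply] at h <;> cases h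
  rw [Set.image_eq_range]
  rfl

end Coding

section MinGraphModel

/-- `F` is the graph `{((s, x), j (s, x))}` of a finite partial pair on `ℕ`. -/
def IsPartialInjGraph (F : Finset ((Finset ℕ × ℕ) × ℕ)) : Prop :=
  InjOn Prod.fst (F : Set ((Finset ℕ × ℕ) × ℕ)) ∧ InjOn Prod.snd (F : Set ((Finset ℕ × ℕ) × ℕ))

open Classical in
/-- An enumeration of all finite partial pairs on `ℕ` (invalid codes give the empty pair). -/
noncomputable def finitePair (k : ℕ) : Finset ((Finset ℕ × ℕ) × ℕ) :=
  match (Encodable.decode k : Option (Finset ((Finset ℕ × ℕ) × ℕ))) with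
  | some F => if IsPartialInjGraph F then F else ∅
  | none => ∅

theorem isPartialInjGraph_finitePair (k : ℕ) : IsPartialInjGraph (finitePair k) := by
  unfold finitePair
  split
  · split_ifs with h
    · exact h
    · simp [IsPartialInjGraph]
  · simp [IsPartialInjGraph]

theorem finitePair_encode {F : Finset ((Finset ℕ × ℕ) × ℕ)} (hF : IsPartialInjGraph F) :
    finitePair (Encodable.encode F) = F := by
  simp [finitePair, Encodable.encodek, hF]

def IsBaseFact (s : Finset ℕ) (x y : ℕ) : Prop :=
  ∃ k, ∃ t ∈ finitePair k,
    s = t.1.1.image (baseCode k) ∧ x = baseCode k t.1.2 ∧ y = baseCode k t.2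

theorem IsBaseFact.unique {s : Finset ℕ} {x y y' : ℕ} (h : IsBaseFact s x y)
    (h' : IsBaseFact s x y') : y = y' := by
  obtain ⟨k, t, ht, rfl, rfl, rfl⟩ := h
  obtain ⟨k', t', ht', hs, hx, rfl⟩ := h'
  obtain ⟨rfl, hx₀⟩ := baseCode_inj.mp hx
  have hs₀ : t.1.1 = t'.1.1 := Finset.image_injective (fun _ _ h => (baseCode_inj.mp h).2) hs
  rw [(isPartialInjGraph_finitePair k).1 ht ht' (Prod.ext hs₀ hx₀)]

theorem IsBaseFact.inj {s s' : Finset ℕ} {x x' y : ℕ} (h : IsBaseFact s x y)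
    (h' : IsBaseFact s' x' y) : s = s' ∧ x = x' := by
  obtain ⟨k, t, ht, rfl, rfl, rfl⟩ := h
  obtain ⟨k', t', ht', rfl, rfl, hy⟩ := h'
  obtain ⟨rfl, hy₀⟩ := baseCode_inj.mp hy
  rw [(isPartialInjGraph_finitePair k).2 ht ht' hy₀]
  exact ⟨rfl, rfl⟩

theorem IsBaseFact.ne_nodeCode {s : Finset ℕ} {x y : ℕ} (h : IsBaseFact s x y) (s' : Finset ℕ)
    (x' : ℕ) : y ≠ nodeCode s' x' := by
  obtain ⟨k, t, -, -, -, rfl⟩ := h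
  exact baseCode_ne_nodeCode _ _ _ _

open Classical in
noncomputable def minJ (s : Finset ℕ) (x : ℕ) : ℕ :=
  if h : ∃ y, IsBaseFact s x y then h.choose else nodeCode s x

theorem minJ_eq_of_isBaseFact {s : Finset ℕ} {x y : ℕ} (h : IsBaseFact s x y) : minJ s x = y := by
  have hex : ∃ y, IsBaseFact s x y := ⟨y, h⟩
  rw [minJ, dif_pos hex]
  exact hex.choose_spec.unique h

theorem minJ_eq_nodeCode {s : Finset ℕ} {x : ℕ} (h : ¬∃ y, IsBaseFact s x y) :
    minJ s x = nodeCode s x := by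
  rw [minJ, dif_neg h]

theorem minJ_inj {s s' : Finset ℕ} {x x' : ℕ} (h : minJ s x = minJ s' x') : s = s' ∧ x = x' := by
  by_cases hb : ∃ y, IsBaseFact s x y <;> by_cases hb' : ∃ y, IsBaseFact s' x' y
  · obtain ⟨y, hy⟩ := hb
    obtain ⟨y', hy'⟩ := hb'
    rw [minJ_eq_of_isBaseFact hy, minJ_eq_of_isBaseFact hy'] at h
    exact hy.inj (h ▸ hy')
  · obtain ⟨y, hy⟩ := hb
    rw [minJ_eq_of_isBaseFact hy, minJ_eq_nodeCode hb'] at h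
    exact absurd h (hy.ne_nodeCode _ _)
  · obtain ⟨y, hy⟩ := hb'
    rw [minJ_eq_of_isBaseFact hy, minJ_eq_nodeCode hb] at h
    exact absurd h.symm (hy.ne_nodeCode _ _)
  · rw [minJ_eq_nodeCode hb, minJ_eq_nodeCode hb'] at h
    exact nodeCode_inj.mp h

open Classical in
noncomputable def minGraphModel : PrePair ℕ where
  carrier := univ
  j p := if h : p.1.Finite then some (minJ h.toFinset p.2) else none

theorem minGraphModel_j_coe (s : Finset ℕ) (x : ℕ) :
    minGraphModel.j (s, x) = some (minJ s x) := by
  simp [minGraphModel]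

theorem minGraphModel_j_eq_some {a : Set ℕ} {x y : ℕ} :
    minGraphModel.j (a, x) = some y ↔ ∃ s : Finset ℕ, a = s ∧ minJ s x = y := by
  constructor
  · intro h
    by_cases ha : a.Finite
    · lift a to Finset ℕ using ha
      exact ⟨a, rfl, Option.some_inj.mp ((minGraphModel_j_coe a x).symm.trans h)⟩
    · simp [minGraphModel, ha] at h
  · rintro ⟨s, rfl, rfl⟩
    exact minGraphModel_j_coe s x

theorem isGraphModel_minGraphModel : minGraphModel.IsGraphModel := by
  refine ⟨⟨univ_nonempty, fun a x y h => ?_, fun ⟨a, x⟩ ⟨a', x'⟩ y h h' => ?_⟩, ?_, infinite_univ⟩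
  · obtain ⟨s, rfl, -⟩ := minGraphModel_j_eq_some.mp h
    exact ⟨s.finite_toSet, subset_univ _, mem_univ _, mem_univ _⟩
  · obtain ⟨s, rfl, rfl⟩ := minGraphModel_j_eq_some.mp h
    obtain ⟨s', rfl, hy⟩ := minGraphModel_j_eq_some.mp h'
    obtain ⟨rfl, rfl⟩ := minJ_inj hy
    rfl
  · intro a x ha _ _
    lift a to Finset ℕ using ha
    exact ⟨_, minGraphModel_j_coe a x⟩

end MinGraphModel

section Retract

variable {β : Type*} {H : PrePair β}

open Classical in
/-- Undefined on the other components, whose pairs need not be realizable in `H`, and on elements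
picked outside the carrier, where totality of `H` would not apply. -/
noncomputable def realize (H : PrePair β) (k : ℕ) (pick : ℕ → β) : ℕ → Option β :=
  codeRec (fun k' m => if k' = k ∧ pick m ∈ H.carrier then some (pick m) else none)
    (fun S x => x.bind fun x' => H.j (some ⁻¹' S, x'))

theorem realize_baseCode_of_ne {k k' : ℕ} (pick : ℕ → β) (hk : k' ≠ k) (m : ℕ) :
    realize H k pick (baseCode k' m) = none := by
  simp [realize, codeRec_baseCode, hk]

theorem realize_baseCode {k : ℕ} {pick : ℕ → β} {m : ℕ} (hm : pick m ∈ H.carrier) :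
    realize H k pick (baseCode k m) = some (pick m) := by
  simp [realize, codeRec_baseCode, hm]

theorem realize_nodeCode (k : ℕ) (pick : ℕ → β) (s : Finset ℕ) (x : ℕ) :
    realize H k pick (nodeCode s x) =
      (realize H k pick x).bind fun x' => H.j (partialImage (realize H k pick) s, x') :=
  codeRec_nodeCode _ _ s x

theorem realize_mem_carrier (hH : H.Valid) {k : ℕ} {pick : ℕ → β} {n : ℕ} {w : β}
    (hw : realize H k pick n = some w) : w ∈ H.carrier := by
  rcases baseCode_or_nodeCode n with ⟨k', m, rfl⟩ | ⟨s, x, rfl⟩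
  · by_cases hk : k' = k
    · subst hk
      by_cases hm : pick m ∈ H.carrier
      · rw [realize_baseCode hm, Option.some_inj] at hw
        exact hw ▸ hm
      · simp [realize, codeRec_baseCode, hm] at hw
    · simp [realize_baseCode_of_ne pick hk] at hw
  · obtain ⟨x', -, hx'⟩ := Option.bind_eq_some_iff.mp ((realize_nodeCode k pick s x).symm.trans hw)
    exact (hH.2.1 _ _ _ hx').2.2.2

def Realizes (H : PrePair β) (k : ℕ) (pick : ℕ → β) : Prop :=
  ∀ t ∈ finitePair k, H.j (pick '' t.1.1, pick t.1.2) = some (pick t.2)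

theorem realize_minJ (hH : H.Valid) {k : ℕ} {pick : ℕ → β} (hpick : Realizes H k pick)
    (s : Finset ℕ) (x : ℕ) : realize H k pick (minJ s x) =
      (realize H k pick x).bind fun x' => H.j (partialImage (realize H k pick) s, x') := by
  by_cases hb : ∃ y, IsBaseFact s x y
  · obtain ⟨y, hy⟩ := hb
    rw [minJ_eq_of_isBaseFact hy]
    obtain ⟨k', t, ht, rfl, rfl, rfl⟩ := hy
    by_cases hk : k' = k
    · subst hk
      obtain ⟨-, hs, hx, hy⟩ := hH.2.1 _ _ _ (hpick t ht)
      rw [realize_baseCode hx, realize_baseCode hy, Option.bind_some, Finset.coe_image,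
        partialImage_image fun m hm => realize_baseCode (hs (mem_image_of_mem pick hm)),
        hpick t ht]
    · simp [realize_baseCode_of_ne pick hk]
  · rw [minJ_eq_nodeCode hb, realize_nodeCode]

theorem isPartialHom_realize (hH : H.Valid) (htot : H.Total) {k : ℕ} {pick : ℕ → β}
    (hpick : Realizes H k pick) : IsPartialHom minGraphModel H (realize H k pick) := by
  refine ⟨fun _ _ => realize_mem_carrier hH, fun a x y h => ?_, fun a x y x' y' h hx hy => ?_⟩
  all_goals obtain ⟨s, rfl, rfl⟩ := minGraphModel_j_eq_some.mp h
  · rw [realize_minJ hH hpick]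
    cases hx : realize H k pick x with
    | none => simp
    | some x' =>
      obtain ⟨y', hy'⟩ := htot (partialImage (realize H k pick) s) x' s.finite_toSet.partialImage
        (fun _ ⟨_, _, hw⟩ => realize_mem_carrier hH hw) (realize_mem_carrier hH hx)
      simp [hy']
  · rwa [realize_minJ hH hpick, hx, Option.bind_some] at hy

open Classical in
noncomputable def codedGraph (H : PrePair β) (S : Finset β) (e : β → ℕ) :
    Finset ((Finset ℕ × ℕ) × ℕ) :=
  ((S.powerset ×ˢ S ×ˢ S).filter fun t => H.j (t.1, t.2.1) = some t.2.2).image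
    fun t => ((t.1.image e, e t.2.1), e t.2.2)

theorem mem_codedGraph {S : Finset β} {e : β → ℕ} {t : (Finset ℕ × ℕ) × ℕ} :
    t ∈ codedGraph H S e ↔ ∃ a x y, a ⊆ S ∧ x ∈ S ∧ y ∈ S ∧ H.j (a, x) = some y ∧
      t = ((a.image e, e x), e y) := by
  simp only [codedGraph, Finset.mem_image, Finset.mem_filter, Finset.mem_product,
    Finset.mem_powerset, Prod.exists]
  grind

theorem isPartialInjGraph_codedGraph (hH : H.Valid) {S : Finset β} {e : β → ℕ}
    (he : InjOn e S) : IsPartialInjGraph (codedGraph H S e) := by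
  constructor
  all_goals
    intro t ht t' ht' h
    obtain ⟨a, x, y, ha, hx, hy, hj, rfl⟩ := mem_codedGraph.mp ht
    obtain ⟨a', x', y', ha', hx', hy', hj', rfl⟩ := mem_codedGraph.mp ht'
  · obtain ⟨ha_eq, hx_eq⟩ := Prod.ext_iff.mp h
    obtain rfl : a = a' := Finset.coe_injective <|
      (he.image_eq_image_iff (Finset.coe_subset.mpr ha) (Finset.coe_subset.mpr ha')).mp
        (by simpa using congrArg (fun u : Finset ℕ => (u : Set ℕ)) ha_eq)
    obtain rfl : x = x' := he hx hx' hx_eq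
    obtain rfl : y = y' := Option.some_inj.mp (hj.symm.trans hj')
    rfl
  · obtain rfl : y = y' := he hy hy' h
    obtain ⟨ha_eq, rfl⟩ := Prod.ext_iff.mp (hH.2.2 _ _ _ hj hj')
    obtain rfl := Finset.coe_injective ha_eq
    rfl

theorem isPartialHom_restrict_baseCode {S : Finset β} {e : β → ℕ} {k : ℕ}
    (hk : finitePair k = codedGraph H S e) :
    IsPartialHom (H.restrict S) minGraphModel fun b => some (baseCode k (e b)) := by
  refine ⟨fun _ _ _ => mem_univ _, fun _ _ _ _ => by simp, fun a x y x' y' h hx hy => ?_⟩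
  obtain ⟨hj, ha, hxS, hyS⟩ := PrePair.restrict_j_eq_some.mp h
  lift a to Finset β using S.finite_toSet.subset ha
  rw [Option.some_inj] at hx hy
  subst hx hy
  have hfact : ((a.image e, e x), e y) ∈ finitePair k :=
    hk ▸ mem_codedGraph.mpr ⟨a, x, y, Finset.coe_subset.mp ha, hxS, hyS, hj, rfl⟩
  have himg : partialImage (fun b => some (baseCode k (e b))) a =
      ↑((a.image e).image (baseCode k)) := by
    ext w
    simp [mem_partialImage]
  rw [himg, minGraphModel_j_coe, minJ_eq_of_isBaseFact ⟨k, _, hfact, rfl, rfl, rfl⟩]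

theorem exists_retract_minGraphModel (hH : H.Valid) (htot : H.Total) (S : Finset β) :
    ∃ (g : β → Option ℕ) (φ : ℕ → Option β),
      IsPartialHom (H.restrict S) minGraphModel g ∧ IsPartialHom minGraphModel H φ ∧
        ∀ b ∈ (S : Set β) ∩ H.carrier, (g b).bind φ = some b := by
  obtain ⟨e, he⟩ := countable_iff_exists_injOn.mp S.countable_toSet
  have : Nonempty β := hH.1.to_subtype.map Subtype.val
  set k := Encodable.encode (codedGraph H S e)
  have hk : finitePair k = codedGraph H S e := finitePair_encode (isPartialInjGraph_codedGraph hH he)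
  have hpick : ∀ b ∈ (S : Set β), Function.invFunOn e S (e b) = b := he.leftInvOn_invFunOn
  refine ⟨_, realize H k (Function.invFunOn e S), isPartialHom_restrict_baseCode hk,
    isPartialHom_realize hH htot fun t ht => ?_, fun b ⟨hbS, hb⟩ => ?_⟩
  · obtain ⟨a, x, y, ha, hx, hy, hj, rfl⟩ := mem_codedGraph.mp (hk ▸ ht)
    rwa [Finset.coe_image, he.leftInvOn_invFunOn.image_image' (Finset.coe_subset.mpr ha),
      hpick x hx, hpick y hy]
  · have := realize_baseCode (k := k) (m := e b) ((hpick b hbS).symm ▸ hb)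
    rwa [hpick b hbS] at this

end Retract

/-- There exists a graph model whose order theory is minimum
among the order theories of all graph models; consequently its equational
theory is contained in that of every graph model. -/
theorem exists_minimum_graph_theory :
    ∃ G : PrePair ℕ, PrePair.IsGraphModel G ∧
      ∀ (β : Type u) (H : PrePair β), PrePair.IsGraphModel H →
        ThLe G ⊆ ThLe H ∧ Th G ⊆ Th H := by
  refine ⟨minGraphModel, isGraphModel_minGraphModel, fun β H ⟨hH, htot, _⟩ => ?_⟩
  have hle : ThLe minGraphModel ⊆ ThLe H :=
    thLe_subset_of_forall_retract hH (exists_retract_minGraphModel hH htot)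
  exact ⟨hle, th_subset_of_thLe_subset hle⟩
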